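/- Let π be a probability density on ℝ^{n·t} (the joint state of t labelled targets) and define the symmetrized density π̌(x_{1:t}) = ∑_{p=1}^{t!} π(Γ_p(x_{1:t})), restricted to a fundamental domain (equivalently, the induced density on unordered t-element multisets), where Γ_p ranges over all coordinate-block permutations. Let ν be any density on ℝ^{n·t} and define ν̌ analogously. Then among all densities φ on ℝ^{n·t} satisfying the symmetrization constraint ∑_{p=1}^{t!} φ(Γ_p(x_{1:t})) = π̌(x_{1:t}) for all x_{1:t} (i.e., φ induces the same unlabelled/symmetric density as π), the KL divergence D(φ ‖ ν) is minimized by φ*(x_{1:t}) = (ν(x_{1:t}) / ν̌(x_{1:t})) · π̌(x_{1:t}) (wherever ν̌ > 0). -/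

import Mathlib

/-!
Write `P = π̌(x)` and `N = ν̌(x)`. On the orbit `{x ∘ σ}` the relabelling `φ*` is proportional
to `ν`, so its KL integrand sums over the orbit to `P log (P / N)`. By the log-sum inequality the
KL integrand of any admissible `φ` sums over the same orbit to at least
`φ̌(x) log (φ̌(x) / N) = P log (P / N)`. Since permuting the blocks preserves Lebesgue measure,
integrating an orbit sum gives `t!` times the integral, so the pointwise inequality between orbit
sums integrates to the theorem.
-/

open MeasureTheory Real

noncomputable def symmetrize {n t : ℕ} (f : (Fin t → Fin n → ℝ) → ℝ)
    (x : Fin t → Fin n → ℝ) : ℝ :=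
  ∑ σ : Equiv.Perm (Fin t), f (x ∘ σ)

theorem Real.sum_mul_log_div_sum_le_sum_mul_log_div {ι : Type*} (s : Finset ι) {a b : ι → ℝ}
    (ha : ∀ i ∈ s, 0 ≤ a i) (hb : ∀ i ∈ s, 0 < b i) :
    (∑ i ∈ s, a i) * log ((∑ i ∈ s, a i) / ∑ i ∈ s, b i) ≤ ∑ i ∈ s, a i * log (a i / b i) := by
  rcases s.eq_empty_or_nonempty with rfl | hs
  · simp
  set B := ∑ i ∈ s, b i
  have hB : 0 < B := Finset.sum_pos hb hs
  -- Jensen for `x log x` at the points `a i / b i` with weights `b i / B`.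
  have jensen := convexOn_mul_log.map_sum_le (t := s) (w := fun i => b i / B)
    (p := fun i => a i / b i) (fun i hi => (div_pos (hb i hi) hB).le)
    (by rw [← Finset.sum_div, div_self hB.ne'])
    (fun i hi => div_nonneg (ha i hi) (hb i hi).le)
  have hcancel : ∀ i ∈ s, b i / B * (a i / b i) = a i / B := fun i hi => by
    field_simp [(hb i hi).ne']
  have hrhs : ∑ i ∈ s, b i / B * (a i / b i * log (a i / b i))
      = (∑ i ∈ s, a i * log (a i / b i)) / B := by
    rw [Finset.sum_div]
    refine Finset.sum_congr rfl fun i hi => ?_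
    rw [← mul_assoc, hcancel i hi, div_mul_eq_mul_div]
  simp only [smul_eq_mul] at jensen
  rw [Finset.sum_congr rfl hcancel, ← Finset.sum_div, hrhs, div_mul_eq_mul_div,
    div_le_div_iff_of_pos_right hB] at jensen
  exact jensen

theorem MeasurableEquiv.coe_piCongrLeft_perm_symm {ι α : Type*} [MeasurableSpace α]
    (σ : Equiv.Perm ι) :
    ⇑(MeasurableEquiv.piCongrLeft (fun _ : ι => α) σ.symm) = fun x => x ∘ σ := by
  funext x j
  simp only [MeasurableEquiv.coe_piCongrLeft]
  simpa using Equiv.piCongrLeft_apply_apply (fun _ : ι => α) σ.symm x (σ j)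

namespace MeasureTheory

variable {ι α : Type*} [Fintype ι] [MeasureSpace α] [SigmaFinite (volume : Measure α)]

theorem integral_comp_perm {E : Type*} [NormedAddCommGroup E] [NormedSpace ℝ E]
    (f : (ι → α) → E) (σ : Equiv.Perm ι) : ∫ x, f (x ∘ σ) = ∫ x, f x := by
  simpa [MeasurableEquiv.coe_piCongrLeft_perm_symm] using
    (volume_measurePreserving_piCongrLeft (fun _ : ι => α) σ.symm).integral_comp' f

theorem Integrable.comp_perm {E : Type*} [NormedAddCommGroup E] {f : (ι → α) → E}
    (hf : Integrable f) (σ : Equiv.Perm ι) : Integrable fun x => f (x ∘ σ) := by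
  simpa [Function.comp_def, MeasurableEquiv.coe_piCongrLeft_perm_symm] using
    ((volume_measurePreserving_piCongrLeft (fun _ : ι => α) σ.symm).integrable_comp_emb
      (MeasurableEquiv.measurableEmbedding _)).2 hf

end MeasureTheory

noncomputable def optimalRelabelling {n t : ℕ} (ν p : (Fin t → Fin n → ℝ) → ℝ)
    (x : Fin t → Fin n → ℝ) : ℝ :=
  ν x / symmetrize ν x * symmetrize p x

section Symmetrize

open scoped Nat

variable {n t : ℕ}

theorem symmetrize_comp_perm (f : (Fin t → Fin n → ℝ) → ℝ) (σ : Equiv.Perm (Fin t))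
    (x : Fin t → Fin n → ℝ) : symmetrize f (x ∘ σ) = symmetrize f x :=
  Equiv.sum_comp (Equiv.mulLeft σ) fun ρ => f (x ∘ ρ)

theorem symmetrize_pos {f : (Fin t → Fin n → ℝ) → ℝ} (hf : ∀ x, 0 < f x)
    (x : Fin t → Fin n → ℝ) : 0 < symmetrize f x :=
  Finset.sum_pos (fun _ _ => hf _) Finset.univ_nonempty

theorem integral_symmetrize {f : (Fin t → Fin n → ℝ) → ℝ} (hf : Integrable f) :
    ∫ x, symmetrize f x = t ! * ∫ x, f x := by
  simp only [symmetrize]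
  rw [integral_finsetSum _ fun σ _ => hf.comp_perm σ]
  simp [integral_comp_perm, Fintype.card_perm]

theorem integral_le_integral_of_symmetrize_le {f g : (Fin t → Fin n → ℝ) → ℝ}
    (hf : Integrable f) (hg : Integrable g) (h : ∀ x, symmetrize f x ≤ symmetrize g x) :
    ∫ x, f x ≤ ∫ x, g x := by
  have hsym : ∫ x, symmetrize f x ≤ ∫ x, symmetrize g x :=
    integral_mono (integrable_finsetSum _ fun σ _ => hf.comp_perm σ)
      (integrable_finsetSum _ fun σ _ => hg.comp_perm σ) h
  rw [integral_symmetrize hf, integral_symmetrize hg] at hsym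
  exact le_of_mul_le_mul_left hsym (by positivity)

theorem symmetrize_mul_log_div_le {f ν : (Fin t → Fin n → ℝ) → ℝ} (hf : ∀ x, 0 ≤ f x)
    (hν : ∀ x, 0 < ν x) (x : Fin t → Fin n → ℝ) :
    symmetrize f x * log (symmetrize f x / symmetrize ν x)
      ≤ symmetrize (fun y => f y * log (f y / ν y)) x :=
  sum_mul_log_div_sum_le_sum_mul_log_div _ (fun _ _ => hf _) fun _ _ => hν _

theorem symmetrize_optimalRelabelling_mul_log {ν : (Fin t → Fin n → ℝ) → ℝ}
    (hν : ∀ x, 0 < ν x) (p : (Fin t → Fin n → ℝ) → ℝ) (x : Fin t → Fin n → ℝ) :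
    symmetrize (fun y => optimalRelabelling ν p y * log (optimalRelabelling ν p y / ν y)) x
      = symmetrize p x * log (symmetrize p x / symmetrize ν x) := by
  have hN := symmetrize_pos hν x
  have hratio : ∀ σ : Equiv.Perm (Fin t),
      optimalRelabelling ν p (x ∘ σ) / ν (x ∘ σ) = symmetrize p x / symmetrize ν x := by
    intro σ
    have hνσ := hν (x ∘ σ)
    simp only [optimalRelabelling, symmetrize_comp_perm]
    field_simp
  calc symmetrize (fun y => optimalRelabelling ν p y * log (optimalRelabelling ν p y / ν y)) x
      = ∑ σ : Equiv.Perm (Fin t), ν (x ∘ σ) / symmetrize ν x * symmetrize p x *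
          log (symmetrize p x / symmetrize ν x) := by
        refine Finset.sum_congr rfl fun σ _ => ?_
        dsimp only
        rw [hratio σ, optimalRelabelling, symmetrize_comp_perm, symmetrize_comp_perm]
    _ = symmetrize p x * log (symmetrize p x / symmetrize ν x) := by
        rw [← Finset.sum_mul, ← Finset.sum_mul, ← Finset.sum_div]
        change symmetrize ν x / symmetrize ν x * _ * _ = _
        rw [div_self hN.ne', one_mul]

end Symmetrize

theorem optimal_relabelling_minimizes_kl_general {n t : ℕ}
    (pd nd fd : (Fin t → Fin n → ℝ) → ℝ)
    (hn0 : ∀ x, 0 < nd x)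
    (hf0 : ∀ x, 0 ≤ fd x)
    (hcon : ∀ x, symmetrize fd x = symmetrize pd x)
    (hint1 : Integrable (fun x =>
      (nd x / symmetrize nd x * symmetrize pd x) *
        Real.log ((nd x / symmetrize nd x * symmetrize pd x) / nd x)))
    (hint2 : Integrable (fun x => fd x * Real.log (fd x / nd x))) :
    ∫ x, (nd x / symmetrize nd x * symmetrize pd x) *
        Real.log ((nd x / symmetrize nd x * symmetrize pd x) / nd x)
      ≤ ∫ x, fd x * Real.log (fd x / nd x) := by
  refine integral_le_integral_of_symmetrize_le hint1 hint2 fun x => ?_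
  calc symmetrize (fun y => optimalRelabelling nd pd y *
          log (optimalRelabelling nd pd y / nd y)) x
      = symmetrize pd x * log (symmetrize pd x / symmetrize nd x) :=
        symmetrize_optimalRelabelling_mul_log hn0 pd x
    _ = symmetrize fd x * log (symmetrize fd x / symmetrize nd x) := by rw [hcon]
    _ ≤ symmetrize (fun y => fd y * log (fd y / nd y)) x := symmetrize_mul_log_div_le hf0 hn0 x

/-- Theorem 3 of the paper: among all densities `φ` on `(ℝⁿ)ᵗ`
with the same permutation-symmetrization as `π` (here `pd`), the KL divergence
`D(φ‖ν)` is minimized by `φ*(x) = (ν(x)/ν̌(x)) · π̌(x)`. -/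
theorem optimal_relabelling_minimizes_kl {n t : ℕ}
    (pd nd fd : (Fin t → Fin n → ℝ) → ℝ)
    (hp0 : ∀ x, 0 ≤ pd x) (hp1 : ∫ x, pd x = 1)
    (hn0 : ∀ x, 0 < nd x) (hn1 : ∫ x, nd x = 1)
    (hf0 : ∀ x, 0 ≤ fd x) (hf1 : ∫ x, fd x = 1)
    (hcon : ∀ x, symmetrize fd x = symmetrize pd x)
    (hint1 : Integrable (fun x =>
      (nd x / symmetrize nd x * symmetrize pd x) *
        Real.log ((nd x / symmetrize nd x * symmetrize pd x) / nd x)))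
    (hint2 : Integrable (fun x => fd x * Real.log (fd x / nd x))) :
    ∫ x, (nd x / symmetrize nd x * symmetrize pd x) *
        Real.log ((nd x / symmetrize nd x * symmetrize pd x) / nd x)
      ≤ ∫ x, fd x * Real.log (fd x / nd x) :=
  optimal_relabelling_minimizes_kl_general pd nd fd hn0 hf0 hcon hint1 hint2
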